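/- Let L be a lattice of rank n ≥ 2 in ℝ^m with λ2(L) ≥ γ·λ1(L) for some real γ ≥ 1, and let v ∈ L be a vector with ‖v‖ = λ1(L). Then every w ∈ L with P_v w ≠ 0 satisfies ‖P_v w‖ ≥ sqrt(γ² − 1/4)·‖v‖. -/

import Mathlib

noncomputable section

/-- The lattice generated by the vectors `B i`: all integer linear combinations. -/
def latticeOf {m n : ℕ} (B : Fin n → EuclideanSpace ℝ (Fin m)) :
    Set (EuclideanSpace ℝ (Fin m)) :=
  {v | ∃ x : Fin n → ℤ, v = ∑ i, (x i : ℝ) • B i}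

/-- `λ₁ L`: the minimum Euclidean norm of a nonzero vector of `L`. -/
def lambda1 {m : ℕ} (L : Set (EuclideanSpace ℝ (Fin m))) : ℝ :=
  sInf {r | ∃ v ∈ L, v ≠ 0 ∧ ‖v‖ = r}

/-- `λ₂ L`: the smallest `r` such that `L` contains two linearly independent
vectors of norm at most `r`. -/
def lambda2 {m : ℕ} (L : Set (EuclideanSpace ℝ (Fin m))) : ℝ :=
  sInf {r | ∃ v ∈ L, ∃ w ∈ L, LinearIndependent ℝ ![v, w] ∧ ‖v‖ ≤ r ∧ ‖w‖ ≤ r}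

/-- `projPerp v w`: the orthogonal projection of `w` onto the orthogonal complement of
the line spanned by `v`. -/
noncomputable def projPerp {m : ℕ} (v w : EuclideanSpace ℝ (Fin m)) :
    EuclideanSpace ℝ (Fin m) :=
  (Submodule.orthogonalProjectionOnto ((Submodule.span ℝ {v})ᗮ) w : EuclideanSpace ℝ (Fin m))

/-!
Round the coefficient of `w` along `v` to the nearest integer `k`: the lattice vector
`w' = w - k • v` has the same projection `P_v w` and a component along `v` of length at most
`‖v‖ / 2`, so `‖w'‖² ≤ ‖v‖² / 4 + ‖P_v w‖²`. Since `P_v w ≠ 0`, the vectors `v` and `w'` are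
independent, and as `v` is a shortest vector, `γ ‖v‖ ≤ λ₂ ≤ ‖w'‖`.
-/

open Submodule

section OrthogonalToLine

variable {E : Type*} [NormedAddCommGroup E] [InnerProductSpace ℝ E]

theorem starProjection_orthogonal_span_singleton_self (v : E) :
    (ℝ ∙ v)ᗮ.starProjection v = 0 :=
  (starProjection_apply_eq_zero_iff _).mpr <|
    le_orthogonal_orthogonal _ <| mem_span_singleton_self v

theorem starProjection_orthogonal_span_singleton_sub_smul (v u : E) (c : ℝ) :
    (ℝ ∙ v)ᗮ.starProjection (u - c • v) = (ℝ ∙ v)ᗮ.starProjection u := by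
  rw [map_sub, map_smul, starProjection_orthogonal_span_singleton_self, smul_zero, sub_zero]

theorem linearIndependent_pair_of_starProjection_orthogonal_ne_zero {v u : E} (hv : v ≠ 0)
    (hu : (ℝ ∙ v)ᗮ.starProjection u ≠ 0) : LinearIndependent ℝ ![v, u] := by
  refine (LinearIndependent.pair_iff' hv).mpr fun a hau => hu ?_
  rw [← hau, map_smul, starProjection_orthogonal_span_singleton_self, smul_zero]

theorem exists_int_norm_sub_smul_sq_le (v u : E) :
    ∃ k : ℤ, ‖u - (k : ℝ) • v‖ ^ 2 ≤ ‖v‖ ^ 2 / 4 + ‖(ℝ ∙ v)ᗮ.starProjection u‖ ^ 2 := by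
  set t := inner ℝ v u / ‖v‖ ^ 2
  refine ⟨round t, ?_⟩
  have hline : (ℝ ∙ v).starProjection (u - (round t : ℝ) • v) = (t - round t) • v := by
    rw [map_sub, map_smul, starProjection_singleton, starProjection_eq_self_iff.mpr
      (mem_span_singleton_self v), sub_smul]
    norm_cast
  have hround : (t - round t) ^ 2 ≤ 1 / 4 := by
    have := pow_le_pow_left₀ (abs_nonneg _) (abs_sub_round t) 2
    norm_num [sq_abs] at this ⊢
    exact this
  rw [norm_sq_eq_add_norm_sq_starProjection _ (ℝ ∙ v), hline,
    starProjection_orthogonal_span_singleton_sub_smul, norm_smul, mul_pow, Real.norm_eq_abs,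
    sq_abs]
  linarith [mul_le_mul_of_nonneg_right hround (sq_nonneg ‖v‖)]

end OrthogonalToLine

theorem projPerp_eq_starProjection {m : ℕ} (v w : EuclideanSpace ℝ (Fin m)) :
    projPerp v w = (ℝ ∙ v)ᗮ.starProjection w :=
  rfl

section Lattice

variable {m n : ℕ}

theorem latticeOf_eq_span_int (B : Fin n → EuclideanSpace ℝ (Fin m)) :
    latticeOf B = Submodule.span ℤ (Set.range B) := by
  ext u
  simp only [latticeOf, SetLike.mem_coe, mem_span_range_iff_exists_fun,
    Int.cast_smul_eq_zsmul, eq_comm]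
  rfl

theorem sub_intCast_smul_mem_latticeOf {B : Fin n → EuclideanSpace ℝ (Fin m)}
    {u v : EuclideanSpace ℝ (Fin m)} (hu : u ∈ latticeOf B) (hv : v ∈ latticeOf B) (k : ℤ) :
    u - (k : ℝ) • v ∈ latticeOf B := by
  rw [latticeOf_eq_span_int, SetLike.mem_coe] at *
  rw [Int.cast_smul_eq_zsmul]
  exact sub_mem hu (zsmul_mem hv k)

theorem lambda1_le_norm {L : Set (EuclideanSpace ℝ (Fin m))} {u : EuclideanSpace ℝ (Fin m)}
    (hu : u ∈ L) (hu0 : u ≠ 0) : lambda1 L ≤ ‖u‖ :=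
  csInf_le ⟨0, by rintro _ ⟨w, -, -, rfl⟩; exact norm_nonneg w⟩ ⟨u, hu, hu0, rfl⟩

theorem lambda2_le_max_norm {L : Set (EuclideanSpace ℝ (Fin m))} {u w : EuclideanSpace ℝ (Fin m)}
    (hu : u ∈ L) (hw : w ∈ L) (huw : LinearIndependent ℝ ![u, w]) :
    lambda2 L ≤ max ‖u‖ ‖w‖ :=
  csInf_le ⟨0, by rintro _ ⟨a, -, -, -, -, ha, -⟩; exact (norm_nonneg a).trans ha⟩
    ⟨u, hu, w, hw, huw, le_max_left _ _, le_max_right _ _⟩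

theorem lambda2_le_norm_of_norm_eq_lambda1 {L : Set (EuclideanSpace ℝ (Fin m))}
    {v w : EuclideanSpace ℝ (Fin m)} (hv : v ∈ L) (hv1 : ‖v‖ = lambda1 L) (hw : w ∈ L)
    (hvw : LinearIndependent ℝ ![v, w]) : lambda2 L ≤ ‖w‖ := by
  have hw0 : w ≠ 0 := by simpa using hvw.ne_zero 1
  calc lambda2 L ≤ max ‖v‖ ‖w‖ := lambda2_le_max_norm hv hw hvw
    _ = ‖w‖ := max_eq_right (hv1 ▸ lambda1_le_norm hw hw0)

end Lattice

theorem stmt10_general {m n : ℕ} (B : Fin n → EuclideanSpace ℝ (Fin m))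
    (γ : ℝ) (hγ : 1 ≤ γ)
    (hgap : γ * lambda1 (latticeOf B) ≤ lambda2 (latticeOf B))
    (v : EuclideanSpace ℝ (Fin m)) (hvL : v ∈ latticeOf B)
    (hv : ‖v‖ = lambda1 (latticeOf B)) :
    ∀ w ∈ latticeOf B, projPerp v w ≠ 0 →
      Real.sqrt (γ ^ 2 - 1 / 4) * ‖v‖ ≤ ‖projPerp v w‖ := by
  intro w hwL hPw
  rw [projPerp_eq_starProjection] at hPw ⊢
  rcases eq_or_ne v 0 with rfl | hv0
  · simp
  obtain ⟨k, hk⟩ := exists_int_norm_sub_smul_sq_le v w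
  set w' := w - (k : ℝ) • v
  have hPw' : (ℝ ∙ v)ᗮ.starProjection w' ≠ 0 := by
    rwa [starProjection_orthogonal_span_singleton_sub_smul]
  have hshort : γ * ‖v‖ ≤ ‖w'‖ := hv ▸ hgap.trans <|
    lambda2_le_norm_of_norm_eq_lambda1 hvL hv (sub_intCast_smul_mem_latticeOf hwL hvL k)
      (linearIndependent_pair_of_starProjection_orthogonal_ne_zero hv0 hPw')
  have hsq : (γ ^ 2 - 1 / 4) * ‖v‖ ^ 2 ≤ ‖(ℝ ∙ v)ᗮ.starProjection w‖ ^ 2 := by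
    have := pow_le_pow_left₀ (by positivity) hshort 2
    rw [mul_pow] at this
    linarith
  calc Real.sqrt (γ ^ 2 - 1 / 4) * ‖v‖
      = Real.sqrt ((γ ^ 2 - 1 / 4) * ‖v‖ ^ 2) := by
        rw [Real.sqrt_mul (by nlinarith), Real.sqrt_sq (norm_nonneg v)]
    _ ≤ ‖(ℝ ∙ v)ᗮ.starProjection w‖ := (Real.sqrt_le_left (norm_nonneg _)).mpr hsq

/-- If `L` is a lattice of rank `n ≥ 2` with `λ₂(L) ≥ γ·λ₁(L)` for some
`γ ≥ 1`, and `v ∈ L` has `‖v‖ = λ₁(L)`, then every `w ∈ L` whose projection orthogonal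
to `v` is nonzero satisfies `‖P_v w‖ ≥ √(γ² - 1/4)·‖v‖`. -/
theorem stmt10 {m n : ℕ} (hn : 2 ≤ n) (B : Fin n → EuclideanSpace ℝ (Fin m))
    (hB : LinearIndependent ℝ B) (γ : ℝ) (hγ : 1 ≤ γ)
    (hgap : γ * lambda1 (latticeOf B) ≤ lambda2 (latticeOf B))
    (v : EuclideanSpace ℝ (Fin m)) (hvL : v ∈ latticeOf B)
    (hv : ‖v‖ = lambda1 (latticeOf B)) :
    ∀ w ∈ latticeOf B, projPerp v w ≠ 0 →
      Real.sqrt (γ ^ 2 - 1 / 4) * ‖v‖ ≤ ‖projPerp v w‖ :=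
  stmt10_general B γ hγ hgap v hvL hv
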